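/- arXiv:1903.09246 — 2 statements merged into one kernel-verified Lean document; each statement's English description precedes it below -/
import Mathlib

section
/- Let X be a finite set and S a finite collection of finite subsets of X. Suppose Δ ⊆ S and f : X → S is a function such that for every x ∈ X we have f(x) ∉ Δ and x ∈ f(x), and for every s ∈ S with s ∉ Δ the fiber {x ∈ X | f(x) = s} has cardinality |s|. Then S \ Δ is an exact cover of X, i.e., every element of X is contained in exactly one member of S \ Δ. -/
/-- If `Δ ⊆ S` and `f : X → S` maps every `x ∈ X` to a set outside `Δ` containing `x`,
and every `s ∈ S \ Δ` has fiber of cardinality `|s|`, then `S \ Δ` is an exact cover of `X`: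
every element of `X` lies in exactly one member of `S \ Δ`. -/
theorem stmt_1 {α : Type*} [DecidableEq α]
    (X : Finset α) (S : Finset (Finset α)) (hS : ∀ s ∈ S, s ⊆ X)
    (Δ : Finset (Finset α)) (hΔ : Δ ⊆ S)
    (f : α → Finset α)
    (hf : ∀ x ∈ X, f x ∈ S ∧ f x ∉ Δ ∧ x ∈ f x)
    (hcard : ∀ s ∈ S, s ∉ Δ → (X.filter fun x => f x = s).card = s.card) :
    ∀ x ∈ X, ∃! s : Finset α, s ∈ S \ Δ ∧ x ∈ s := by
  -- For s ∈ S \ Δ, the fiber equals s.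
  have key : ∀ s ∈ S, s ∉ Δ → (X.filter fun x => f x = s) = s := by
    intro s hs hsΔ
    apply Finset.eq_of_subset_of_card_le
    · intro x hx
      simp only [Finset.mem_filter] at hx
      obtain ⟨hxX, hfx⟩ := hx
      exact hfx ▸ (hf x hxX).2.2
    · exact (hcard s hs hsΔ).ge
  intro x hx
  obtain ⟨hfS, hfΔ, hxf⟩ := hf x hx
  refine ⟨f x, ⟨Finset.mem_sdiff.mpr ⟨hfS, hfΔ⟩, hxf⟩, ?_⟩
  rintro s ⟨hsSΔ, hxs⟩
  obtain ⟨hsS, hsΔ⟩ := Finset.mem_sdiff.mp hsSΔ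
  have : x ∈ X.filter fun x => f x = s := by rw [key s hsS hsΔ]; exact hxs
  exact ((Finset.mem_filter.mp this).2).symm
end

section
/- Let X be a finite set and S a finite collection of finite subsets of X. Then X has an exact cover from S (there exists S' ⊆ S such that every element of X is contained in exactly one member of S') if and only if there exist Δ ⊆ S and a function f : X → S such that for every x ∈ X, f(x) ∉ Δ and x ∈ f(x), and for every s ∈ S with s ∉ Δ, the fiber {x ∈ X | f(x) = s} has cardinality |s|. -/
/-- `X` has an exact cover from `S` iff there exist `Δ ⊆ S` and `f : X → S` such that for
every `x ∈ X`, `f x ∉ Δ` and `x ∈ f x`, and every `s ∈ S \ Δ` has fiber of cardinality `|s|`. -/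
theorem stmt_3 {α : Type*} [DecidableEq α]
    (X : Finset α) (S : Finset (Finset α)) (hS : ∀ s ∈ S, s ⊆ X) :
    (∃ S' : Finset (Finset α), S' ⊆ S ∧ ∀ x ∈ X, ∃! s : Finset α, s ∈ S' ∧ x ∈ s) ↔
    (∃ (Δ : Finset (Finset α)) (f : α → Finset α), Δ ⊆ S ∧
      (∀ x ∈ X, f x ∈ S ∧ f x ∉ Δ ∧ x ∈ f x) ∧
      ∀ s ∈ S, s ∉ Δ → (X.filter fun x => f x = s).card = s.card) := by
  constructor
  · rintro ⟨S', hS'S, hcov⟩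
    classical
    refine ⟨S \ S', fun x => if hx : x ∈ X then (hcov x hx).choose else ∅, Finset.sdiff_subset, ?_, ?_⟩
    · intro x hx
      obtain ⟨⟨hmem, hxin⟩, -⟩ := (hcov x hx).choose_spec
      simp only [dif_pos hx]
      exact ⟨hS'S hmem, fun hΔ => (Finset.mem_sdiff.1 hΔ).2 hmem, hxin⟩
    · intro s hsS hsΔ
      have hsS' : s ∈ S' := by
        by_contra h
        exact hsΔ (Finset.mem_sdiff.2 ⟨hsS, h⟩)
      congr 1
      ext y
      simp only [Finset.mem_filter]
      constructor
      · rintro ⟨hy, hfy⟩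
        obtain ⟨⟨-, hxin⟩, -⟩ := (hcov y hy).choose_spec
        rw [dif_pos hy] at hfy
        rw [← hfy]
        exact hxin
      · intro hys
        have hy : y ∈ X := hS s hsS hys
        obtain ⟨-, huniq⟩ := (hcov y hy).choose_spec
        exact ⟨hy, by rw [dif_pos hy]; exact (huniq s ⟨hsS', hys⟩).symm⟩
  · rintro ⟨Δ, f, hΔS, hf, hfib⟩
    refine ⟨S \ Δ, Finset.sdiff_subset, fun x hx => ?_⟩
    obtain ⟨hfS, hfΔ, hxf⟩ := hf x hx
    have key : ∀ s ∈ S, s ∉ Δ → X.filter (fun x => f x = s) = s := by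
      intro s hsS hsΔ
      apply Finset.eq_of_subset_of_card_le
      · intro y hy
        obtain ⟨hyX, hfy⟩ := Finset.mem_filter.1 hy
        exact hfy ▸ (hf y hyX).2.2
      · exact (hfib s hsS hsΔ).ge
    refine ⟨f x, ⟨Finset.mem_sdiff.2 ⟨hfS, hfΔ⟩, hxf⟩, ?_⟩
    rintro s ⟨hsS', hxs⟩
    obtain ⟨hsS, hsΔ⟩ := Finset.mem_sdiff.1 hsS'
    have : x ∈ X.filter (fun x => f x = s) := (key s hsS hsΔ).symm ▸ hxs
    exact ((Finset.mem_filter.1 this).2).symm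
end
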